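/- Fix p ∈ ℕ, p ≥ 1, h = 1/p. Every operator A in H^h (i.e., (A u)(x) = Σ_{j ∈ (ℤ/pℤ)^N} A_j(x) u(x + hj) with A_j step functions constant on cubes of side h) has operator norm on L²(𝕋^N → ℂ^M) equal to the operator norm of the matrix B_A ∈ ℂ^{Mp^N × Mp^N}. -/

import Mathlib

open MeasureTheory

noncomputable section

abbrev Torus (N : ℕ) := Fin N → AddCircle (1 : ℝ)

abbrev L2 (N M : ℕ) := Lp (EuclideanSpace ℂ (Fin M)) 2 (volume : Measure (Torus N))

/-- The canonical representative in `[0,1)` of a point of `𝕋 = ℝ/ℤ`. -/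
def lift1 (x : AddCircle (1 : ℝ)) : ℝ := (AddCircle.equivIco 1 0 x : ℝ)

/-- The index (in `(ℤ/pℤ)^N`) of the cube `∏_i [h p_i, h p_i + h)`, `h = 1/p`,
containing the point `x ∈ 𝕋^N`. -/
def cubeIdx (N p : ℕ) [NeZero p] (x : Torus N) : Fin N → ZMod p :=
  fun i => ((⌊lift1 (x i) * p⌋ : ℤ) : ZMod p)

/-- The shift vector `h j ∈ 𝕋^N` for `j ∈ (ℤ/pℤ)^N`, `h = 1/p`. -/
def hvec (N p : ℕ) [NeZero p] (j : Fin N → ZMod p) : Torus N :=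
  fun i => ((((j i).val : ℝ) / p : ℝ) : AddCircle (1 : ℝ))

/-- The action of the finite-difference-type operator with cube-step coefficients:
`(A u)(x) = Σ_{j ∈ (ℤ/pℤ)^N} A_j(x) u(x + h j)`, where the step function `A_j` has the
constant value `C j r` on the cube indexed by `r`. -/
def opOf (N M p : ℕ) [NeZero p]
    (C : (Fin N → ZMod p) → (Fin N → ZMod p) → Matrix (Fin M) (Fin M) ℂ)
    (u : Torus N → EuclideanSpace ℂ (Fin M)) : Torus N → EuclideanSpace ℂ (Fin M) :=
  fun x => ∑ j : Fin N → ZMod p,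
    Matrix.toEuclideanCLM (𝕜 := ℂ) (C j (cubeIdx N p x)) (u (x + hvec N p j))

/-- The block matrix `B_A = (A_{j−r}(y + h r))_{r,j} ∈ ℂ^{Mp^N × Mp^N}` associated with the
coefficients `C` (the value `A_{j-r}(y + h r)` being the constant value of `A_{j-r}` on the
cube indexed by `r`). -/
def Bmat (N M p : ℕ) [NeZero p]
    (C : (Fin N → ZMod p) → (Fin N → ZMod p) → Matrix (Fin M) (Fin M) ℂ) :
    Matrix ((Fin N → ZMod p) × Fin M) ((Fin N → ZMod p) × Fin M) ℂ :=
  fun rq jq => C (jq.1 - rq.1) rq.1 rq.2 jq.2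

/-! For `x ∈ 𝕋^N`, the values of `u` at the `p^N` points `x + h s`, indexed by the cube each
point lies in, form a vector of `ℂ^{M p^N}`, and the operator acts on these vectors as
multiplication by `B_A`. Since Haar measure is translation invariant, integrating the squared
norm of this vector over `x` gives `p^N ‖u‖²`; hence `‖A‖ ≤ ‖B_A‖`. Conversely, for the step
function taking the value `v_r` on the `r`-th cube this vector is `v` at every `x`, which gives
`‖B_A v‖ ≤ ‖A‖ ‖v‖`. -/

instance : IsProbabilityMeasure (volume : Measure UnitAddCircle) := ⟨by simp⟩

lemma MeasureTheory.Lp.norm_sq_eq_integral {α E : Type*} [MeasurableSpace α] {μ : Measure α}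
    [NormedAddCommGroup E] (f : Lp E 2 μ) : ‖f‖ ^ 2 = ∫ x, ‖f x‖ ^ 2 ∂μ := by
  rw [Lp.norm_def, toReal_eLpNorm (Lp.aestronglyMeasurable f),
    lpNorm_eq_integral_norm_rpow_toReal two_ne_zero ENNReal.ofNat_ne_top
      (Lp.aestronglyMeasurable f)]
  simp only [ENNReal.toReal_ofNat, Real.rpow_ofNat]
  exact Real.rpow_inv_natCast_pow (integral_nonneg fun _ => by positivity) two_ne_zero

lemma ae_forall_comp_add_eq {G α ι : Type*} [MeasurableSpace G] [AddGroup G] [MeasurableAdd G]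
    {μ : Measure G} [μ.IsAddRightInvariant] [Countable ι] (τ : ι → G) {f g : G → α}
    (h : f =ᵐ[μ] g) : ∀ᵐ x ∂μ, ∀ i, f (x + τ i) = g (x + τ i) :=
  ae_all_iff.2 fun i => (measurePreserving_add_right μ (τ i)).quasiMeasurePreserving.ae_eq_comp h

section FiberNorm

variable {G E ι : Type*} [AddGroup G] [NormedAddCommGroup E] [Fintype ι]

def fiberNormSq (τ : ι → G) (f : G → E) (x : G) : ℝ := ∑ i, ‖f (x + τ i)‖ ^ 2

lemma fiberNormSq_congr (τ : ι → G) {f g : G → E} {x : G}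
    (h : ∀ i, f (x + τ i) = g (x + τ i)) : fiberNormSq τ f x = fiberNormSq τ g x := by
  simp only [fiberNormSq, h]

variable [MeasurableSpace G] [MeasurableAdd G] {μ : Measure G} [μ.IsAddRightInvariant]

lemma integrable_fiberNormSq (τ : ι → G) (f : Lp E 2 μ) : Integrable (fiberNormSq τ f) μ :=
  integrable_finsetSum _ fun i _ =>
    ((Lp.memLp f).integrable_norm_pow two_ne_zero).comp_add_right (τ i)

lemma integral_fiberNormSq (τ : ι → G) (f : Lp E 2 μ) :
    ∫ x, fiberNormSq τ f x ∂μ = Fintype.card ι * ‖f‖ ^ 2 := by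
  simp only [fiberNormSq]
  rw [integral_finsetSum _ fun i _ =>
    ((Lp.memLp f).integrable_norm_pow two_ne_zero).comp_add_right (τ i)]
  simp [integral_add_right_eq_self (fun x => ‖f x‖ ^ 2), Lp.norm_sq_eq_integral]

lemma MeasureTheory.Lp.norm_le_of_fiberNormSq_le [Nonempty ι] (τ : ι → G) {f g : Lp E 2 μ} {c : ℝ}
    (hc : 0 ≤ c) (h : ∀ᵐ x ∂μ, fiberNormSq τ g x ≤ c ^ 2 * fiberNormSq τ f x) :
    ‖g‖ ≤ c * ‖f‖ := by
  have hcard : (0 : ℝ) < Fintype.card ι := Nat.cast_pos.2 Fintype.card_pos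
  have : Fintype.card ι * ‖g‖ ^ 2 ≤ Fintype.card ι * (c * ‖f‖) ^ 2 := by
    rw [← integral_fiberNormSq τ g, mul_pow, mul_left_comm, ← integral_fiberNormSq τ f,
      ← integral_const_mul]
    exact integral_mono_ae (integrable_fiberNormSq τ g)
      ((integrable_fiberNormSq τ f).const_mul _) h
  exact (pow_le_pow_iff_left₀ (norm_nonneg _) (by positivity) two_ne_zero).1
    (le_of_mul_le_mul_left this hcard)

lemma MeasureTheory.Lp.card_mul_norm_sq_of_fiberNormSq_ae_eq [IsProbabilityMeasure μ] (τ : ι → G)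
    {f : Lp E 2 μ} {a : ℝ} (h : ∀ᵐ x ∂μ, fiberNormSq τ f x = a) :
    Fintype.card ι * ‖f‖ ^ 2 = a := by
  rw [← integral_fiberNormSq τ f, integral_congr_ae h]
  simp

end FiberNorm

section Torus

variable {N M p : ℕ} [NeZero p]

lemma hvec_eq_compLeft : hvec N p = AddMonoidHom.compLeft ZMod.toAddCircle (Fin N) := by
  funext j i
  simp [hvec, ZMod.toAddCircle_apply]

lemma hvec_add (j k : Fin N → ZMod p) : hvec N p (j + k) = hvec N p j + hvec N p k := by
  rw [hvec_eq_compLeft, map_add]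

lemma coe_lift1 (a : UnitAddCircle) : (lift1 a : UnitAddCircle) = a :=
  AddCircle.coe_equivIco

lemma intCast_floor_lift1_add_toAddCircle_mul (a : UnitAddCircle) (c : ZMod p) :
    ((⌊lift1 (a + ZMod.toAddCircle c) * p⌋ : ℤ) : ZMod p) = (⌊lift1 a * p⌋ : ℤ) + c := by
  have hp : (p : ℝ) ≠ 0 := NeZero.ne _
  obtain ⟨k, hk⟩ :
      ∃ k : ℤ, k • (1 : ℝ) = lift1 (a + ZMod.toAddCircle c) - (lift1 a + c.val / p) := by
    rw [← AddCircle.coe_eq_zero_iff, AddCircle.coe_sub, AddCircle.coe_add, coe_lift1, coe_lift1,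
      ← ZMod.toAddCircle_apply, sub_self]
  have : lift1 (a + ZMod.toAddCircle c) * p = lift1 a * p + ((c.val + k * p : ℤ) : ℝ) := by
    rw [zsmul_one, eq_sub_iff_add_eq] at hk
    rw [← hk]
    push_cast
    field_simp
    ring
  rw [this, Int.floor_add_intCast]
  push_cast
  simp

lemma cubeIdx_add_hvec (x : Torus N) (j : Fin N → ZMod p) :
    cubeIdx N p (x + hvec N p j) = cubeIdx N p x + j := by
  funext i
  rw [hvec_eq_compLeft]
  exact intCast_floor_lift1_add_toAddCircle_mul (x i) (j i)

variable (N M p) in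
def fiberVec (g : Torus N → EuclideanSpace ℂ (Fin M)) (x : Torus N) :
    EuclideanSpace ℂ ((Fin N → ZMod p) × Fin M) :=
  WithLp.toLp 2 fun rq => g (x + hvec N p (rq.1 - cubeIdx N p x)) rq.2

lemma fiberVec_congr {g g' : Torus N → EuclideanSpace ℂ (Fin M)} {x : Torus N}
    (h : ∀ s, g (x + hvec N p s) = g' (x + hvec N p s)) :
    fiberVec N M p g x = fiberVec N M p g' x := by
  simp only [fiberVec, h]

lemma norm_fiberVec_sq (g : Torus N → EuclideanSpace ℂ (Fin M)) (x : Torus N) :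
    ‖fiberVec N M p g x‖ ^ 2 = fiberNormSq (hvec N p) g x := by
  rw [EuclideanSpace.norm_sq_eq, Fintype.sum_prod_type, fiberNormSq]
  simp only [fiberVec, ← EuclideanSpace.norm_sq_eq]
  exact Fintype.sum_equiv (Equiv.subRight (cubeIdx N p x)) _ _ fun r => rfl

lemma fiberVec_opOf (C : (Fin N → ZMod p) → (Fin N → ZMod p) → Matrix (Fin M) (Fin M) ℂ)
    (u : Torus N → EuclideanSpace ℂ (Fin M)) (x : Torus N) :
    fiberVec N M p (opOf N M p C u) x
      = Matrix.toEuclideanCLM (𝕜 := ℂ) (Bmat N M p C) (fiberVec N M p u x) := by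
  ext ⟨r, q⟩
  simp only [fiberVec, opOf, Bmat, cubeIdx_add_hvec, add_sub_cancel, WithLp.ofLp_sum,
    Finset.sum_apply, Matrix.ofLp_toEuclideanCLM, Matrix.mulVec, dotProduct, Fintype.sum_prod_type]
  refine Fintype.sum_equiv (Equiv.addRight r) _ _ fun j => ?_
  have : r - cubeIdx N p x + j = j + r - cubeIdx N p x := by abel
  simp only [Equiv.coe_addRight, add_sub_cancel_right, add_assoc, ← hvec_add, this]

variable (N M p) in
def stepFun (v : EuclideanSpace ℂ ((Fin N → ZMod p) × Fin M)) (x : Torus N) :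
    EuclideanSpace ℂ (Fin M) :=
  WithLp.toLp 2 fun q => v (cubeIdx N p x, q)

lemma fiberVec_stepFun (v : EuclideanSpace ℂ ((Fin N → ZMod p) × Fin M)) (x : Torus N) :
    fiberVec N M p (stepFun N M p v) x = v := by
  ext ⟨r, q⟩
  simp [fiberVec, stepFun, cubeIdx_add_hvec]

lemma measurable_lift1 : Measurable lift1 :=
  measurable_subtype_coe.comp (AddCircle.measurableEquivIco 1 0).measurable

lemma stronglyMeasurable_comp_cubeIdx {E : Type*} [TopologicalSpace E]
    (g : (Fin N → ZMod p) → E) : StronglyMeasurable (g ∘ cubeIdx N p) := by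
  have hfloor : Measurable fun (x : Torus N) i => ⌊lift1 (x i) * p⌋ :=
    measurable_pi_lambda _ fun i =>
      ((measurable_lift1.comp (measurable_pi_apply i)).mul_const _).floor
  exact (StronglyMeasurable.of_discrete
    (f := fun z : Fin N → ℤ => g fun i => (z i : ZMod p))).comp_measurable hfloor

lemma memLp_stepFun (v : EuclideanSpace ℂ ((Fin N → ZMod p) × Fin M)) :
    MemLp (stepFun N M p v) 2 volume := by
  set G : (Fin N → ZMod p) → EuclideanSpace ℂ (Fin M) :=
    fun r => WithLp.toLp 2 fun q => v (r, q)
  refine MemLp.of_bound (stronglyMeasurable_comp_cubeIdx G).aestronglyMeasurable (∑ r, ‖G r‖)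
    (ae_of_all _ fun x => ?_)
  exact Finset.single_le_sum (f := fun r => ‖G r‖) (fun r _ => norm_nonneg _)
    (Finset.mem_univ (cubeIdx N p x))

variable (C : (Fin N → ZMod p) → (Fin N → ZMod p) → Matrix (Fin M) (Fin M) ℂ)
  (T : L2 N M →L[ℂ] L2 N M)

lemma opNorm_le_norm_toEuclideanCLM_Bmat
    (hT : ∀ u : L2 N M, (T u : Torus N → EuclideanSpace ℂ (Fin M)) =ᵐ[volume] opOf N M p C u) :
    ‖T‖ ≤ ‖Matrix.toEuclideanCLM (𝕜 := ℂ) (Bmat N M p C)‖ := by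
  refine T.opNorm_le_bound (norm_nonneg _) fun u => ?_
  refine Lp.norm_le_of_fiberNormSq_le (hvec N p) (norm_nonneg _) ?_
  filter_upwards [ae_forall_comp_add_eq (hvec N p) (hT u)] with x hx
  rw [fiberNormSq_congr _ hx, ← norm_fiberVec_sq, ← norm_fiberVec_sq, fiberVec_opOf, ← mul_pow]
  exact pow_le_pow_left₀ (norm_nonneg _) (ContinuousLinearMap.le_opNorm _ _) 2

lemma norm_toEuclideanCLM_Bmat_le_opNorm
    (hT : ∀ u : L2 N M, (T u : Torus N → EuclideanSpace ℂ (Fin M)) =ᵐ[volume] opOf N M p C u) :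
    ‖Matrix.toEuclideanCLM (𝕜 := ℂ) (Bmat N M p C)‖ ≤ ‖T‖ := by
  set B := Matrix.toEuclideanCLM (𝕜 := ℂ) (Bmat N M p C)
  refine B.opNorm_le_bound (norm_nonneg T) fun v => ?_
  set φ : L2 N M := (memLp_stepFun v).toLp
  have hφ : ⇑φ =ᵐ[volume] stepFun N M p v := MemLp.coeFn_toLp _
  have hnorm_φ : Fintype.card (Fin N → ZMod p) * ‖φ‖ ^ 2 = ‖v‖ ^ 2 := by
    refine Lp.card_mul_norm_sq_of_fiberNormSq_ae_eq (hvec N p) ?_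
    filter_upwards [ae_forall_comp_add_eq (hvec N p) hφ] with x hx
    rw [fiberNormSq_congr _ hx, ← norm_fiberVec_sq, fiberVec_stepFun]
  have hnorm_Tφ : Fintype.card (Fin N → ZMod p) * ‖T φ‖ ^ 2 = ‖B v‖ ^ 2 := by
    refine Lp.card_mul_norm_sq_of_fiberNormSq_ae_eq (hvec N p) ?_
    filter_upwards [ae_forall_comp_add_eq (hvec N p) (hT φ),
      ae_forall_comp_add_eq (hvec N p) hφ] with x hTx hx
    rw [fiberNormSq_congr _ hTx, ← norm_fiberVec_sq, fiberVec_opOf, fiberVec_congr hx,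
      fiberVec_stepFun]
  have : ‖B v‖ ^ 2 ≤ (‖T‖ * ‖v‖) ^ 2 := by
    rw [← hnorm_Tφ, mul_pow, ← hnorm_φ, mul_left_comm, ← mul_pow]
    gcongr
    exact T.le_opNorm φ
  exact le_of_sq_le_sq this (by positivity)

end Torus

/-- Fix `p ≥ 1`, `h = 1/p`.  Every operator `A ∈ H^h`, i.e.
`(A u)(x) = Σ_j A_j(x) u(x + h j)` with cube-step coefficients `C`, has operator norm on
`L²(𝕋^N → ℂ^M)` equal to the operator norm of the matrix `B_A ∈ ℂ^{Mp^N × Mp^N}`. -/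
theorem stmt8 (N M p : ℕ) [NeZero p]
    (C : (Fin N → ZMod p) → (Fin N → ZMod p) → Matrix (Fin M) (Fin M) ℂ)
    (T : L2 N M →L[ℂ] L2 N M)
    (hT : ∀ u : L2 N M,
      (T u : Torus N → EuclideanSpace ℂ (Fin M)) =ᵐ[volume] opOf N M p C u) :
    ‖T‖ = ‖Matrix.toEuclideanCLM (𝕜 := ℂ) (Bmat N M p C)‖ :=
  le_antisymm (opNorm_le_norm_toEuclideanCLM_Bmat C T hT)
    (norm_toEuclideanCLM_Bmat_le_opNorm C T hT)
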